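/- arXiv:math/0003093 — 2 statements merged into one kernel-verified Lean document; each statement's English description precedes it below -/
import Mathlib

section
/- Let (E, φ) be a Higgs pair of Harder–Narasimhan type μ, and let F ⊂ E be a φ-invariant subbundle. Then the point (rk F, deg F) lies in (on or below the boundary of) the Harder–Narasimhan polygon Pol(μ) of E. -/
/-- Abstract model of the lattice of `φ`-invariant subbundles (saturated `φ`-invariant
subsheaves) of a Higgs pair `(E, φ)` on a smooth projective curve over a field of
characteristic zero, recording their ranks and degrees.  The listed axioms are the standard
facts about ranks and degrees of subsheaves of a fixed vector bundle on a curve: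
rank is strictly monotone on saturated subsheaves, rank is modular and degree submodular with
respect to intersection and (saturated) sum (because `F ∩ G` and `F ∨ G` are `φ`-invariant when
`F` and `G` are, as used by Shatz), and degrees of subsheaves of `E` are bounded above. -/
structure HiggsSubobjectLattice where
  /-- the `φ`-invariant subbundles of `E` -/
  Sub : Type
  [lat : Lattice Sub]
  [bdd : BoundedOrder Sub]
  /-- rank (with `⊥ = 0` the zero subsheaf and `⊤ = E`) -/
  rk : Sub → ℕ
  /-- degree -/
  deg : Sub → ℤ
  rk_bot : rk ⊥ = 0
  deg_bot : deg ⊥ = 0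
  rk_strictMono : StrictMono rk
  rk_modular : ∀ F G, rk (F ⊓ G) + rk (F ⊔ G) = rk F + rk G
  deg_submodular : ∀ F G, deg F + deg G ≤ deg (F ⊓ G) + deg (F ⊔ G)
  deg_bddAbove : ∃ B : ℤ, ∀ F, deg F ≤ B

attribute [instance] HiggsSubobjectLattice.lat HiggsSubobjectLattice.bdd

namespace HiggsSubobjectLattice

variable (P : HiggsSubobjectLattice)

/-- The slope of the quotient `G/F` of two nested `φ`-invariant subsheaves. -/
noncomputable def relSlope (F G : P.Sub) : ℚ :=
  ((P.deg G - P.deg F : ℤ) : ℚ) / ((P.rk G - P.rk F : ℤ) : ℚ)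

/-- `c 0 = 0 ⊂ c 1 ⊂ ⋯ ⊂ c ℓ = E` is a Harder–Narasimhan filtration of the Higgs pair
`(E, φ)`: a filtration by `φ`-invariant subbundles whose successive quotients (as Higgs pairs)
are semistable of strictly decreasing slope.  Semistability of the quotient `c (i+1) / c i`
is expressed through its `φ`-invariant subsheaves, i.e. the subobjects between
`c i` and `c (i+1)`. -/
def IsHNFiltration (ℓ : ℕ) (c : ℕ → P.Sub) : Prop :=
  c 0 = ⊥ ∧ c ℓ = ⊤ ∧ (∀ i, i < ℓ → c i < c (i + 1)) ∧
    (∀ i, i + 2 ≤ ℓ → P.relSlope (c (i + 1)) (c (i + 2)) < P.relSlope (c i) (c (i + 1))) ∧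
    (∀ i, i < ℓ → ∀ F, c i < F → F ≤ c (i + 1) →
      P.relSlope (c i) F ≤ P.relSlope (c i) (c (i + 1)))

end HiggsSubobjectLattice
namespace HiggsSubobjectLattice

variable (P : HiggsSubobjectLattice)

lemma slope_mul {ℓ : ℕ} {c : ℕ → P.Sub} (hc : P.IsHNFiltration ℓ c) {j : ℕ} (hj : j < ℓ) :
    (P.deg (c (j + 1)) : ℚ) - P.deg (c j) =
      P.relSlope (c j) (c (j + 1)) * ((P.rk (c (j + 1)) : ℚ) - P.rk (c j)) := by
  have hlt := hc.2.2.1 j hj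
  have hr : P.rk (c j) < P.rk (c (j + 1)) := P.rk_strictMono hlt
  have hpos : (0 : ℚ) < (P.rk (c (j + 1)) : ℚ) - P.rk (c j) := by
    have : (P.rk (c j) : ℚ) < P.rk (c (j + 1)) := by exact_mod_cast hr
    linarith
  simp only [HiggsSubobjectLattice.relSlope]
  push_cast
  field_simp

lemma mu_anti {ℓ : ℕ} {c : ℕ → P.Sub} (hc : P.IsHNFiltration ℓ c) :
    ∀ k, k < ℓ → ∀ j, j ≤ k →
      P.relSlope (c k) (c (k + 1)) ≤ P.relSlope (c j) (c (j + 1)) := by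
  intro k
  induction k with
  | zero => intro _ j hj; interval_cases j; exact le_refl _
  | succ n ih =>
      intro hk j hj
      rcases Nat.eq_or_lt_of_le hj with h | h
      · subst h; exact le_refl _
      · have hjn : j ≤ n := Nat.lt_succ_iff.mp h
        have hdec := hc.2.2.2.1 n (by omega)
        exact le_trans hdec.le (ih (by omega) j hjn)

lemma step {ℓ : ℕ} {c : ℕ → P.Sub} (hc : P.IsHNFiltration ℓ c) (F : P.Sub)
    {j : ℕ} (hj : j < ℓ) :
    ((P.deg (F ⊓ c (j + 1)) : ℚ) - P.deg (F ⊓ c j))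
        ≤ P.relSlope (c j) (c (j + 1)) *
          ((P.rk (F ⊓ c (j + 1)) : ℚ) - (P.rk (F ⊓ c j) : ℚ)) ∧
      P.rk (F ⊓ c j) ≤ P.rk (F ⊓ c (j + 1)) ∧
      P.rk (F ⊓ c (j + 1)) + P.rk (c j) ≤ P.rk (F ⊓ c j) + P.rk (c (j + 1)) := by
  have hlt := hc.2.2.1 j hj
  have hle : c j ≤ c (j + 1) := hlt.le
  set Fj := F ⊓ c j with hFj
  set Fj1 := F ⊓ c (j + 1) with hFj1
  set G := Fj1 ⊔ c j with hG
  have hinf : Fj1 ⊓ c j = Fj := by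
    rw [hFj1, inf_assoc, inf_eq_right.mpr hle]
  have hFle : Fj ≤ Fj1 := inf_le_inf_left F hle
  have hGle : G ≤ c (j + 1) := sup_le inf_le_right hle
  have hcjG : c j ≤ G := le_sup_right
  have hrkc : P.rk (c j) < P.rk (c (j + 1)) := P.rk_strictMono hlt
  by_cases hcase : G = c j
  · have h1 : Fj1 ≤ c j := le_sup_left.trans hcase.le
    have h2 : Fj1 ≤ Fj := le_inf inf_le_left h1
    have heq : Fj1 = Fj := le_antisymm h2 hFle
    refine ⟨?_, ?_, ?_⟩
    · rw [heq]; simp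
    · rw [heq]
    · rw [heq]; omega
  · have hG' : c j < G := hcjG.lt_of_ne (Ne.symm hcase)
    have hslope := hc.2.2.2.2 j hj G hG' hGle
    have hrkG : P.rk (c j) < P.rk G := P.rk_strictMono hG'
    have hrkGle : P.rk G ≤ P.rk (c (j + 1)) := (P.rk_strictMono.monotone hGle)
    have hmod : P.rk Fj + P.rk G = P.rk Fj1 + P.rk (c j) := by
      have := P.rk_modular Fj1 (c j)
      rw [hinf] at this
      exact this
    have hsub : (P.deg Fj1 : ℚ) + P.deg (c j) ≤ (P.deg Fj : ℚ) + P.deg G := by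
      have h := P.deg_submodular Fj1 (c j)
      rw [hinf] at h
      exact_mod_cast h
    have hpos : (0 : ℚ) < (P.rk G : ℚ) - P.rk (c j) := by
      have : (P.rk (c j) : ℚ) < P.rk G := by exact_mod_cast hrkG
      linarith
    have hμ : ((P.deg G : ℚ) - P.deg (c j)) ≤
        P.relSlope (c j) (c (j + 1)) * ((P.rk G : ℚ) - P.rk (c j)) := by
      have h := hslope
      rw [show P.relSlope (c j) G =
          ((P.deg G : ℚ) - P.deg (c j)) / ((P.rk G : ℚ) - P.rk (c j)) by
        simp only [HiggsSubobjectLattice.relSlope]; push_cast; ring] at h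
      exact (div_le_iff₀ hpos).mp h
    have hrQ : (P.rk Fj1 : ℚ) - P.rk Fj = (P.rk G : ℚ) - P.rk (c j) := by
      have : (P.rk Fj : ℚ) + P.rk G = (P.rk Fj1 : ℚ) + P.rk (c j) := by exact_mod_cast hmod
      linarith
    refine ⟨by rw [hrQ]; linarith, by omega, by omega⟩

end HiggsSubobjectLattice

/-- **Shatz's theorem for Higgs pairs.** Let `(E, φ)` be a Higgs pair with
Harder–Narasimhan filtration `0 = E⁰ ⊂ ⋯ ⊂ E^ℓ = E` of type `μ`, and let `F ⊆ E` be a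
`φ`-invariant subbundle.  Then the point `(rk F, deg F)` lies on or below the
Harder–Narasimhan polygon `Pol(μ)`: since `Pol(μ)` is the concave polygon with vertices
`(rk Eⁱ, deg Eⁱ)`, this says precisely that for every edge (the line through consecutive
vertices, of slope `μ_{i+1}`) the point lies on or below the corresponding line. -/
theorem higgs_subsheaf_below_hn_polygon
    (P : HiggsSubobjectLattice) (ℓ : ℕ) (c : ℕ → P.Sub)
    (hc : P.IsHNFiltration ℓ c) (F : P.Sub) :
    ∀ i, i < ℓ →
      (P.deg F : ℚ) ≤ (P.deg (c i) : ℚ) +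
        P.relSlope (c i) (c (i + 1)) * ((P.rk F : ℚ) - (P.rk (c i) : ℚ)) := by
  obtain ⟨h0, htop, hlt, hdec, hss⟩ := hc
  have hc' : P.IsHNFiltration ℓ c := ⟨h0, htop, hlt, hdec, hss⟩
  intro i hi
  set m := P.relSlope (c i) (c (i + 1)) with hm
  set f : ℕ → ℚ := fun j => (P.deg (F ⊓ c j) : ℚ) - m * P.rk (F ⊓ c j) with hf
  set g : ℕ → ℚ := fun j => (P.deg (c j) : ℚ) - m * P.rk (c j) with hg
  have key : ∀ j ∈ Finset.range ℓ,
      f (j + 1) - f j ≤ (if j < i then g (j + 1) - g j else 0) := by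
    intro j hjmem
    have hj : j < ℓ := Finset.mem_range.mp hjmem
    obtain ⟨hδ, hrmono, hrle⟩ := P.step hc' F hj
    have hrmonoQ : (P.rk (F ⊓ c j) : ℚ) ≤ P.rk (F ⊓ c (j + 1)) := by exact_mod_cast hrmono
    have hrleQ : (P.rk (F ⊓ c (j + 1)) : ℚ) + P.rk (c j) ≤
        (P.rk (F ⊓ c j) : ℚ) + P.rk (c (j + 1)) := by exact_mod_cast hrle
    by_cases hji : j < i
    · rw [if_pos hji]
      have hma : m ≤ P.relSlope (c j) (c (j + 1)) := P.mu_anti hc' i hi j hji.le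
      have hds := P.slope_mul hc' hj
      simp only [hf, hg]
      nlinarith [mul_nonneg (sub_nonneg.mpr hma)
          (by linarith : (0:ℚ) ≤ ((P.rk (c (j+1)) : ℚ) - P.rk (c j)) -
            ((P.rk (F ⊓ c (j+1)) : ℚ) - P.rk (F ⊓ c j))),
        mul_nonneg (sub_nonneg.mpr hma) (sub_nonneg.mpr hrmonoQ)]
    · rw [if_neg hji]
      have hij : i ≤ j := Nat.le_of_not_lt hji
      have hma : P.relSlope (c j) (c (j + 1)) ≤ m := P.mu_anti hc' j hj i hij
      simp only [hf]
      nlinarith [mul_le_mul_of_nonneg_right hma (sub_nonneg.mpr hrmonoQ)]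
  have h1 := Finset.sum_le_sum key
  rw [Finset.sum_range_sub f] at h1
  have h2 : (∑ j ∈ Finset.range ℓ, (if j < i then g (j + 1) - g j else 0))
      = g i - g 0 := by
    rw [← Finset.sum_subset (Finset.range_subset_range.mpr hi.le)
      (by intro x _ hx; rw [if_neg (by simpa using hx)])]
    rw [Finset.sum_congr rfl (fun x hx => if_pos (Finset.mem_range.mp hx)),
      Finset.sum_range_sub g]
  rw [h2] at h1
  have hfl : f ℓ = (P.deg F : ℚ) - m * P.rk F := by
    simp [hf, htop]
  have hf0 : f 0 = 0 := by
    simp [hf, h0, P.deg_bot, P.rk_bot]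
  have hg0 : g 0 = 0 := by
    simp [hg, h0, P.deg_bot, P.rk_bot]
  rw [hfl, hf0, hg0] at h1
  simp only [hg] at h1
  linarith
end

section
/- The moduli space H (of representations ρ: F_{2g} → GL(2,ℂ) with ∏[A_j,B_j] = −I, modulo conjugation) is diffeomorphic to the product of a torus factor and M quotiented by Σ = (ℤ/2)^{2g}: scalar multiplication induces a map T × M → H which is a free quotient by Σ, where T = (ℂ*)^{2g} and M is the corresponding SL(2,ℂ)-representation space. -/
open scoped commutatorElement in
/-- The product of commutators `∏_j [A_j, B_j]` of a `2g`-tuple of elements of a group. -/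
def commProd {Γ : Type*} [Group Γ] (g : ℕ) (A B : Fin g → Γ) : Γ :=
  ((List.finRange g).map fun j => ⁅A j, B j⁆).prod

/-- The space `μ⁻¹(−I) ⊂ GL(2,ℂ)^{2g}` of `2g`-tuples of matrices whose product of
commutators is `−I`. -/
def GLRep (g : ℕ) : Type :=
  {ρ : (Fin g → GL (Fin 2) ℂ) × (Fin g → GL (Fin 2) ℂ) // commProd g ρ.1 ρ.2 = -1}

/-- The analogous space for `SL(2,ℂ)`. -/
def SLRep (g : ℕ) : Type :=
  {ρ : (Fin g → Matrix.SpecialLinearGroup (Fin 2) ℂ) ×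
        (Fin g → Matrix.SpecialLinearGroup (Fin 2) ℂ) //
    ((commProd g ρ.1 ρ.2 : Matrix.SpecialLinearGroup (Fin 2) ℂ) :
        Matrix (Fin 2) (Fin 2) ℂ) = -1}

/-- Simultaneous conjugacy of tuples in a group. -/
def conjRel {Γ : Type*} [Group Γ] (g : ℕ)
    (s t : (Fin g → Γ) × (Fin g → Γ)) : Prop :=
  ∃ h : Γ, (∀ j, t.1 j = h * s.1 j * h⁻¹) ∧ (∀ j, t.2 j = h * s.2 j * h⁻¹)

/-- The scalars `ℂ* → GL(2,ℂ)`. -/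
noncomputable def unitScalar : ℂˣ →* GL (Fin 2) ℂ :=
  Units.map (algebraMap ℂ (Matrix (Fin 2) (Fin 2) ℂ)).toMonoidHom

/-- Multiply an `SL(2,ℂ)`-tuple by a `(ℂ*)^{2g}`-tuple of scalars, giving a `GL(2,ℂ)`-tuple. -/
noncomputable def scalarCombo {g : ℕ} (t : (Fin g → ℂˣ) × (Fin g → ℂˣ)) (ρ : SLRep g) :
    (Fin g → GL (Fin 2) ℂ) × (Fin g → GL (Fin 2) ℂ) :=
  (fun j => unitScalar (t.1 j) * Matrix.SpecialLinearGroup.toGL (ρ.1.1 j),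
   fun j => unitScalar (t.2 j) * Matrix.SpecialLinearGroup.toGL (ρ.1.2 j))


/-!
Scalar matrices are central in `GL(2,ℂ)`, so they change neither commutators nor conjugation,
and every element of `GL(2,ℂ)` is a scalar times an element of `SL(2,ℂ)` (divide by a square root
of its determinant); this gives surjectivity. If `t ρ` and `t' ρ'` are conjugate, comparing
determinants gives `t'ⱼ² = tⱼ²`, so `ε = t' / t` lies in `Σ = {±1}^{2g}`; and a conjugating
element of `GL(2,ℂ)` can be rescaled into `SL(2,ℂ)`, so `ε⁻¹ ρ` and `ρ'` are conjugate in `SL(2,ℂ)`.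
-/
open Matrix (GeneralLinearGroup SpecialLinearGroup)
open Matrix.SpecialLinearGroup (toGL)

section Group

variable {Γ : Type*} [Group Γ] {g : ℕ}

theorem conjRel_equivalence : Equivalence (conjRel (Γ := Γ) g) where
  refl _ := ⟨1, fun _ => by group, fun _ => by group⟩
  symm := by
    rintro _ _ ⟨h, h₁, h₂⟩
    exact ⟨h⁻¹, fun j => by rw [h₁ j]; group, fun j => by rw [h₂ j]; group⟩
  trans := by
    rintro _ _ _ ⟨h, h₁, h₂⟩ ⟨k, k₁, k₂⟩
    exact ⟨k * h, fun j => by rw [k₁ j, h₁ j]; group, fun j => by rw [k₂ j, h₂ j]; group⟩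

theorem quot_mk_conjRel_eq_iff {s t : (Fin g → Γ) × (Fin g → Γ)} :
    Quot.mk (conjRel g) s = Quot.mk (conjRel g) t ↔ conjRel g s t :=
  Quot.eq.trans conjRel_equivalence.eqvGen_iff

theorem conj_mul_left_of_mem_center {z : Γ} (hz : z ∈ Subgroup.center Γ) (h x : Γ) :
    z * h * x * (z * h)⁻¹ = h * x * h⁻¹ := by
  calc z * h * x * (z * h)⁻¹ = z * (h * x * h⁻¹) * z⁻¹ := by group
    _ = h * x * h⁻¹ := by rw [← Subgroup.mem_center_iff.mp hz, mul_inv_cancel_right]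

open scoped commutatorElement in
theorem commutatorElement_mul_of_mem_center {z w : Γ} (hz : z ∈ Subgroup.center Γ)
    (hw : w ∈ Subgroup.center Γ) (a b : Γ) : ⁅z * a, w * b⁆ = ⁅a, b⁆ := by
  have hz' := Subgroup.mem_center_iff.mp hz
  have hw' := Subgroup.mem_center_iff.mp hw
  calc ⁅z * a, w * b⁆ = z * (a * w * b * a⁻¹) * z⁻¹ * b⁻¹ * w⁻¹ := by
        rw [commutatorElement_def]; group
    _ = a * w * b * a⁻¹ * b⁻¹ * w⁻¹ := by rw [← hz', mul_inv_cancel_right]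
    _ = w * ⁅a, b⁆ * w⁻¹ := by rw [hw' a, commutatorElement_def]; group
    _ = ⁅a, b⁆ := by rw [← hw', mul_inv_cancel_right]

theorem commProd_mul_of_mem_center {z w : Fin g → Γ} (hz : ∀ j, z j ∈ Subgroup.center Γ)
    (hw : ∀ j, w j ∈ Subgroup.center Γ) (A B : Fin g → Γ) :
    commProd g (fun j => z j * A j) (fun j => w j * B j) = commProd g A B := by
  simp only [commProd, commutatorElement_mul_of_mem_center (hz _) (hw _)]

theorem map_commProd {Δ : Type*} [Group Δ] (f : Γ →* Δ) (A B : Fin g → Γ) :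
    f (commProd g A B) = commProd g (fun j => f (A j)) (fun j => f (B j)) := by
  simp only [commProd, map_list_prod, List.map_map, Function.comp_def, map_commutatorElement]

end Group

theorem IsAlgClosed.exists_units_sq_eq {K : Type*} [Field K] [IsAlgClosed K] (u : Kˣ) :
    ∃ v : Kˣ, v ^ 2 = u := by
  obtain ⟨z, hz⟩ := IsAlgClosed.exists_pow_nat_eq (u : K) two_pos
  have hz₀ : z ≠ 0 := by
    rintro rfl
    exact u.ne_zero (by simpa using hz.symm)
  exact ⟨Units.mk0 z hz₀, Units.ext (by simpa using hz)⟩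

theorem Matrix.SpecialLinearGroup.exists_toGL_eq_of_det_eq_one {n R : Type*} [Fintype n]
    [DecidableEq n] [CommRing R] {x : GL n R} (hx : GeneralLinearGroup.det x = 1) :
    ∃ m : SpecialLinearGroup n R, toGL m = x :=
  ⟨⟨x, congrArg Units.val hx⟩, Units.ext rfl⟩

theorem Matrix.SpecialLinearGroup.toGL_eq_neg_one_iff {n R : Type*} [Fintype n]
    [DecidableEq n] [CommRing R] {m : SpecialLinearGroup n R} :
    toGL m = -1 ↔ (m : Matrix n n R) = -1 := by
  rw [Units.ext_iff, Units.val_neg, Units.val_one, coe_GL_coe_matrix]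

theorem unitScalar_mem_center (u : ℂˣ) : unitScalar u ∈ Subgroup.center (GL (Fin 2) ℂ) := by
  rw [GeneralLinearGroup.center_eq_range_scalar]
  exact ⟨u, rfl⟩

theorem det_unitScalar (u : ℂˣ) : GeneralLinearGroup.det (unitScalar u) = u ^ 2 :=
  GeneralLinearGroup.det_scalar u

theorem exists_unitScalar_mul_toGL_eq (x : GL (Fin 2) ℂ) :
    ∃ (u : ℂˣ) (m : SpecialLinearGroup (Fin 2) ℂ), unitScalar u * toGL m = x := by
  obtain ⟨v, hv⟩ := IsAlgClosed.exists_units_sq_eq (GeneralLinearGroup.det x)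
  obtain ⟨m, hm⟩ := SpecialLinearGroup.exists_toGL_eq_of_det_eq_one
    (x := unitScalar v⁻¹ * x) (by rw [map_mul, det_unitScalar, inv_pow, hv, inv_mul_cancel])
  exact ⟨v, m, by rw [hm, ← mul_assoc, ← map_mul, mul_inv_cancel, map_one, one_mul]⟩

theorem exists_toGL_conj_eq (h : GL (Fin 2) ℂ) :
    ∃ k : SpecialLinearGroup (Fin 2) ℂ, ∀ x, h * x * h⁻¹ = toGL k * x * (toGL k)⁻¹ := by
  obtain ⟨u, k, rfl⟩ := exists_unitScalar_mul_toGL_eq h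
  exact ⟨k, conj_mul_left_of_mem_center (unitScalar_mem_center u) _⟩

theorem toGL_conj_unitScalar_mul (k m : SpecialLinearGroup (Fin 2) ℂ) (u : ℂˣ) :
    toGL k * (unitScalar u * toGL m) * (toGL k)⁻¹ = unitScalar u * toGL (k * m * k⁻¹) := by
  have hu := Subgroup.mem_center_iff.mp (unitScalar_mem_center u) (toGL k)
  rw [map_mul, map_mul, map_inv, ← mul_assoc, hu]
  group

theorem sq_eq_sq_of_unitScalar_mul_toGL_conj {u u' : ℂˣ} {m m' : SpecialLinearGroup (Fin 2) ℂ}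
    {h : GL (Fin 2) ℂ} (he : unitScalar u' * toGL m' = h * (unitScalar u * toGL m) * h⁻¹) :
    u' ^ 2 = u ^ 2 := by
  simpa [det_unitScalar, mul_comm (GeneralLinearGroup.det h)] using
    congrArg GeneralLinearGroup.det he

section Rep

variable {g : ℕ}

theorem coe_commProd_eq_neg_one_iff (A B : Fin g → SpecialLinearGroup (Fin 2) ℂ) :
    ((commProd g A B : SpecialLinearGroup (Fin 2) ℂ) : Matrix (Fin 2) (Fin 2) ℂ) = -1 ↔
      commProd g (fun j => toGL (A j)) (fun j => toGL (B j)) = -1 := by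
  rw [← SpecialLinearGroup.toGL_eq_neg_one_iff, map_commProd]

theorem commProd_unitScalar_mul (u v : Fin g → ℂˣ) (A B : Fin g → GL (Fin 2) ℂ) :
    commProd g (fun j => unitScalar (u j) * A j) (fun j => unitScalar (v j) * B j) =
      commProd g A B :=
  commProd_mul_of_mem_center (fun _ => unitScalar_mem_center _)
    (fun _ => unitScalar_mem_center _) A B

theorem exists_scalarCombo_eq (s : GLRep g) : ∃ t ρ, scalarCombo t ρ = s.1 := by
  choose u A hA using fun j => exists_unitScalar_mul_toGL_eq (s.1.1 j)
  choose v B hB using fun j => exists_unitScalar_mul_toGL_eq (s.1.2 j)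
  have hρ :
      ((commProd g A B : SpecialLinearGroup (Fin 2) ℂ) : Matrix (Fin 2) (Fin 2) ℂ) = -1 := by
    rw [coe_commProd_eq_neg_one_iff, ← commProd_unitScalar_mul u v]
    simpa only [hA, hB] using s.2
  exact ⟨(u, v), ⟨(A, B), hρ⟩, Prod.ext (funext hA) (funext hB)⟩

theorem exists_toGL_eq_unitScalar_inv_mul {ε : ℂˣ} (hε : ε ^ 2 = 1)
    (m : SpecialLinearGroup (Fin 2) ℂ) :
    ∃ m' : SpecialLinearGroup (Fin 2) ℂ, toGL m' = (unitScalar ε)⁻¹ * toGL m :=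
  SpecialLinearGroup.exists_toGL_eq_of_det_eq_one (by simp [det_unitScalar, hε])

theorem exists_slRep_unitScalar_inv_mul {ε : (Fin g → ℂˣ) × (Fin g → ℂˣ)}
    (hε₁ : ∀ j, ε.1 j ^ 2 = 1) (hε₂ : ∀ j, ε.2 j ^ 2 = 1) (ρ : SLRep g) :
    ∃ ρ' : SLRep g,
      (∀ j, toGL (ρ'.1.1 j) = (unitScalar (ε.1 j))⁻¹ * toGL (ρ.1.1 j)) ∧
      (∀ j, toGL (ρ'.1.2 j) = (unitScalar (ε.2 j))⁻¹ * toGL (ρ.1.2 j)) := by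
  choose A hA using fun j => exists_toGL_eq_unitScalar_inv_mul (hε₁ j) (ρ.1.1 j)
  choose B hB using fun j => exists_toGL_eq_unitScalar_inv_mul (hε₂ j) (ρ.1.2 j)
  have hρ :
      ((commProd g A B : SpecialLinearGroup (Fin 2) ℂ) : Matrix (Fin 2) (Fin 2) ℂ) = -1 := by
    rw [coe_commProd_eq_neg_one_iff, ← commProd_unitScalar_mul ε.1 ε.2]
    simpa only [hA, hB, mul_inv_cancel_left] using (coe_commProd_eq_neg_one_iff _ _).mp ρ.2
  exact ⟨⟨(A, B), hρ⟩, hA, hB⟩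

theorem scalarCombo_eq_of_eq_mul {t t' ε : (Fin g → ℂˣ) × (Fin g → ℂˣ)} {ρ ρ' : SLRep g}
    (ht₁ : t'.1 = ε.1 * t.1) (ht₂ : t'.2 = ε.2 * t.2)
    (hρ₁ : ∀ j, toGL (ρ'.1.1 j) = (unitScalar (ε.1 j))⁻¹ * toGL (ρ.1.1 j))
    (hρ₂ : ∀ j, toGL (ρ'.1.2 j) = (unitScalar (ε.2 j))⁻¹ * toGL (ρ.1.2 j)) :
    scalarCombo t' ρ' = scalarCombo t ρ := by
  have cancel (e u : ℂˣ) (x : GL (Fin 2) ℂ) :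
      unitScalar (e * u) * ((unitScalar e)⁻¹ * x) = unitScalar u * x := by
    rw [mul_comm e, map_mul, mul_assoc, mul_inv_cancel_left]
  exact Prod.ext (funext fun j => by simp only [scalarCombo, ht₁, hρ₁, Pi.mul_apply, cancel])
    (funext fun j => by simp only [scalarCombo, ht₂, hρ₂, Pi.mul_apply, cancel])

theorem conjRel_scalarCombo_iff (t : (Fin g → ℂˣ) × (Fin g → ℂˣ)) (ρ ρ' : SLRep g) :
    conjRel g (scalarCombo t ρ) (scalarCombo t ρ') ↔ conjRel g ρ.1 ρ'.1 := by
  constructor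
  · rintro ⟨h, h₁, h₂⟩
    obtain ⟨k, hk⟩ := exists_toGL_conj_eq h
    refine ⟨k, fun j => SpecialLinearGroup.toGL_injective
        (mul_left_cancel (a := unitScalar (t.1 j)) ?_),
      fun j => SpecialLinearGroup.toGL_injective (mul_left_cancel (a := unitScalar (t.2 j)) ?_)⟩
    · rw [← toGL_conj_unitScalar_mul, ← hk]; exact h₁ j
    · rw [← toGL_conj_unitScalar_mul, ← hk]; exact h₂ j
  · rintro ⟨k, h₁, h₂⟩
    exact ⟨toGL k, fun j => by simp only [scalarCombo, toGL_conj_unitScalar_mul, h₁],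
      fun j => by simp only [scalarCombo, toGL_conj_unitScalar_mul, h₂]⟩

theorem quot_mk_scalarCombo_eq_iff (t t' : (Fin g → ℂˣ) × (Fin g → ℂˣ))
    (ρ ρ' : SLRep g) :
    Quot.mk (conjRel g) (scalarCombo t ρ) = Quot.mk (conjRel g) (scalarCombo t' ρ') ↔
      ∃ ε : (Fin g → ℂˣ) × (Fin g → ℂˣ),
        (∀ j, ε.1 j ^ 2 = 1) ∧ (∀ j, ε.2 j ^ 2 = 1) ∧
        (t'.1 = ε.1 * t.1) ∧ (t'.2 = ε.2 * t.2) ∧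
        ∃ ρ'' : SLRep g,
          (∀ j, toGL (ρ''.1.1 j) = (unitScalar (ε.1 j))⁻¹ * toGL (ρ.1.1 j)) ∧
          (∀ j, toGL (ρ''.1.2 j) = (unitScalar (ε.2 j))⁻¹ * toGL (ρ.1.2 j)) ∧
          Quot.mk (conjRel g) ρ''.1 = Quot.mk (conjRel g) ρ'.1 := by
  rw [quot_mk_conjRel_eq_iff]
  constructor
  · rintro ⟨h, h₁, h₂⟩
    have hε₁ (j : Fin g) : (t' / t).1 j ^ 2 = 1 := by
      rw [Prod.fst_div, Pi.div_apply, div_pow, sq_eq_sq_of_unitScalar_mul_toGL_conj (h₁ j),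
        div_self']
    have hε₂ (j : Fin g) : (t' / t).2 j ^ 2 = 1 := by
      rw [Prod.snd_div, Pi.div_apply, div_pow, sq_eq_sq_of_unitScalar_mul_toGL_conj (h₂ j),
        div_self']
    have ht₁ : t'.1 = (t' / t).1 * t.1 := (div_mul_cancel _ _).symm
    have ht₂ : t'.2 = (t' / t).2 * t.2 := (div_mul_cancel _ _).symm
    obtain ⟨ρ'', hρ₁, hρ₂⟩ := exists_slRep_unitScalar_inv_mul hε₁ hε₂ ρ
    refine ⟨t' / t, hε₁, hε₂, ht₁, ht₂, ρ'', hρ₁, hρ₂, quot_mk_conjRel_eq_iff.mpr ?_⟩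
    rw [← conjRel_scalarCombo_iff t', scalarCombo_eq_of_eq_mul ht₁ ht₂ hρ₁ hρ₂]
    exact ⟨h, h₁, h₂⟩
  · rintro ⟨ε, -, -, ht₁, ht₂, ρ'', hρ₁, hρ₂, hρ''⟩
    rw [← scalarCombo_eq_of_eq_mul ht₁ ht₂ hρ₁ hρ₂, conjRel_scalarCombo_iff]
    exact quot_mk_conjRel_eq_iff.mp hρ''

end Rep

theorem glRep_is_free_sigma_quotient_of_torus_times_slRep_general (g : ℕ) :
    -- surjectivity of `T × M → H`
    (∀ s : GLRep g, ∃ (t : (Fin g → ℂˣ) × (Fin g → ℂˣ)) (ρ : SLRep g)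
        (hc : commProd g (scalarCombo t ρ).1 (scalarCombo t ρ).2 = -1),
        Quot.mk (conjRel g) (⟨scalarCombo t ρ, hc⟩ : GLRep g).1 = Quot.mk (conjRel g) s.1) ∧
    -- the fibres of `T × M → H` are exactly the orbits of `Σ = {±1}^{2g}`
    (∀ (t t' : (Fin g → ℂˣ) × (Fin g → ℂˣ)) (ρ ρ' : SLRep g),
      (Quot.mk (conjRel g) (scalarCombo t ρ) = Quot.mk (conjRel g) (scalarCombo t' ρ')) ↔
        ∃ ε : (Fin g → ℂˣ) × (Fin g → ℂˣ),
          (∀ j, ε.1 j ^ 2 = 1) ∧ (∀ j, ε.2 j ^ 2 = 1) ∧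
          (t'.1 = ε.1 * t.1) ∧ (t'.2 = ε.2 * t.2) ∧
          ∃ ρ'' : SLRep g,
            (∀ j, Matrix.SpecialLinearGroup.toGL (ρ''.1.1 j)
              = (unitScalar (ε.1 j))⁻¹ * Matrix.SpecialLinearGroup.toGL (ρ.1.1 j)) ∧
            (∀ j, Matrix.SpecialLinearGroup.toGL (ρ''.1.2 j)
              = (unitScalar (ε.2 j))⁻¹ * Matrix.SpecialLinearGroup.toGL (ρ.1.2 j)) ∧
            Quot.mk (conjRel g) ρ''.1 = Quot.mk (conjRel g) ρ'.1) ∧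
    -- `Σ` acts freely on `T × M`
    (∀ (t : (Fin g → ℂˣ) × (Fin g → ℂˣ)) (ε : (Fin g → ℂˣ) × (Fin g → ℂˣ)),
      (∀ j, ε.1 j ^ 2 = 1) → (∀ j, ε.2 j ^ 2 = 1) →
      ε.1 * t.1 = t.1 → ε.2 * t.2 = t.2 → ε = 1) := by
  refine ⟨fun s => ?_, quot_mk_scalarCombo_eq_iff,
    fun t ε _ _ h₁ h₂ => Prod.ext (mul_eq_right.mp h₁) (mul_eq_right.mp h₂)⟩
  obtain ⟨t, ρ, h⟩ := exists_scalarCombo_eq s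
  exact ⟨t, ρ, h ▸ s.2, congrArg _ h⟩

/-- Let `H = μ⁻¹(−I)/GL(2,ℂ)` be the moduli of representations with
`∏ [A_j,B_j] = −I` modulo conjugation, `M` the corresponding `SL(2,ℂ)`-space modulo
conjugation, and `T = (ℂ*)^{2g}`.  Scalar multiplication induces a map `T × M → H` which is a
free quotient by `Σ = (ℤ/2)^{2g}`: it is surjective, two pairs `(t, [ρ])`, `(t', [ρ'])` have
the same image in `H` iff they differ by the action `ε • (t, [ρ]) = (εt, [ε⁻¹ρ])` of some
`ε ∈ Σ = {±1}^{2g} ⊂ T`, and `Σ` acts freely. -/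
theorem glRep_is_free_sigma_quotient_of_torus_times_slRep (g : ℕ) (hg : 2 ≤ g) :
    -- surjectivity of `T × M → H`
    (∀ s : GLRep g, ∃ (t : (Fin g → ℂˣ) × (Fin g → ℂˣ)) (ρ : SLRep g)
        (hc : commProd g (scalarCombo t ρ).1 (scalarCombo t ρ).2 = -1),
        Quot.mk (conjRel g) (⟨scalarCombo t ρ, hc⟩ : GLRep g).1 = Quot.mk (conjRel g) s.1) ∧
    -- the fibres of `T × M → H` are exactly the orbits of `Σ = {±1}^{2g}`
    (∀ (t t' : (Fin g → ℂˣ) × (Fin g → ℂˣ)) (ρ ρ' : SLRep g),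
      (Quot.mk (conjRel g) (scalarCombo t ρ) = Quot.mk (conjRel g) (scalarCombo t' ρ')) ↔
        ∃ ε : (Fin g → ℂˣ) × (Fin g → ℂˣ),
          (∀ j, ε.1 j ^ 2 = 1) ∧ (∀ j, ε.2 j ^ 2 = 1) ∧
          (t'.1 = ε.1 * t.1) ∧ (t'.2 = ε.2 * t.2) ∧
          ∃ ρ'' : SLRep g,
            (∀ j, Matrix.SpecialLinearGroup.toGL (ρ''.1.1 j)
              = (unitScalar (ε.1 j))⁻¹ * Matrix.SpecialLinearGroup.toGL (ρ.1.1 j)) ∧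
            (∀ j, Matrix.SpecialLinearGroup.toGL (ρ''.1.2 j)
              = (unitScalar (ε.2 j))⁻¹ * Matrix.SpecialLinearGroup.toGL (ρ.1.2 j)) ∧
            Quot.mk (conjRel g) ρ''.1 = Quot.mk (conjRel g) ρ'.1) ∧
    -- `Σ` acts freely on `T × M`
    (∀ (t : (Fin g → ℂˣ) × (Fin g → ℂˣ)) (ε : (Fin g → ℂˣ) × (Fin g → ℂˣ)),
      (∀ j, ε.1 j ^ 2 = 1) → (∀ j, ε.2 j ^ 2 = 1) →
      ε.1 * t.1 = t.1 → ε.2 * t.2 = t.2 → ε = 1) :=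
  glRep_is_free_sigma_quotient_of_torus_times_slRep_general g
end
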